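/- Let $m \ge 1$, $r, R > 0$, and let $(a_k)_{k\in\mathbb{N}}$ be a sequence of functions on an open set $U\subseteq\mathbb{R}^n$ satisfying $\|\nabla^j a_k\|_{L^\infty(U)} \le C\, r^j R^k (j+k)!/(j+k+1)^m$ for all $j,k$. Then for any $0 < c < 1/(eR)$ and any $\hbar \in (0,1]$, the partial sum $\sum_{k=0}^{\lfloor c/\hbar \rfloor} \hbar^k a_k$ satisfies $\big\|\sum_{k=0}^{\lfloor c/\hbar\rfloor} \hbar^k a_k\big\|_{L^\infty(U)} \le C' $ for a constant $C'$ depending only on $C, R, c, m$. -/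
import Mathlib


open Finset

/-- Boundedness of the realisation of an analytic classical symbol: if
`‖∇ʲ a_k‖_{L^∞(U)} ≤ C rʲ Rᵏ (j+k)!/(j+k+1)^m` for all `j, k`, then for `0 < c < 1/(eR)`
the truncated sum `∑_{k ≤ c/ℏ} ℏᵏ a_k` is bounded on `U` by a constant depending only on
`C, R, c, m`. -/
theorem symbol_realisation_bounded (m : ℝ) (hm : 1 ≤ m) (r R C c : ℝ)
    (hr : 0 < r) (hR : 0 < R) (hC : 0 ≤ C)
    (hc : 0 < c) (hc' : c < 1 / (Real.exp 1 * R)) :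
    ∃ C' : ℝ, ∀ (n : ℕ) (U : Set (EuclideanSpace ℝ (Fin n))), IsOpen U →
      ∀ a : ℕ → EuclideanSpace ℝ (Fin n) → ℂ,
      (∀ (j k : ℕ), ∀ x ∈ U, ‖iteratedFDerivWithin ℝ j (a k) U x‖ ≤
          C * r ^ j * R ^ k * ((j + k).factorial : ℝ) / ((j : ℝ) + k + 1) ^ m) →
      ∀ ℏ : ℝ, ℏ ∈ Set.Ioc (0 : ℝ) 1 → ∀ x ∈ U,
        ‖∑ k ∈ range (⌊c / ℏ⌋₊ + 1), ℏ ^ k • a k x‖ ≤ C' := by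
  have he : (1:ℝ) < Real.exp 1 := by
    have := Real.exp_one_gt_d9; linarith
  have hRc : R * c < 1 := by
    have h1 : R * c < R * (1 / (Real.exp 1 * R)) := mul_lt_mul_of_pos_left hc' hR
    have h2 : R * (1 / (Real.exp 1 * R)) = 1 / Real.exp 1 := by
      field_simp
    rw [h2] at h1
    have h3 : 1 / Real.exp 1 < 1 := by
      rw [div_lt_one (by positivity)]; exact he
    linarith
  have hRc0 : 0 ≤ R * c := by positivity
  refine ⟨C * (1 - R * c)⁻¹, ?_⟩
  intro n U hU a ha ℏ hℏ x hx
  obtain ⟨hℏ0, hℏ1⟩ := hℏ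
  have key : ∀ k ∈ range (⌊c / ℏ⌋₊ + 1), ‖ℏ ^ k • a k x‖ ≤ C * (R * c) ^ k := by
    intro k hk
    have hk' : (k : ℝ) ≤ c / ℏ := by
      have hk1 : k ≤ ⌊c / ℏ⌋₊ := Nat.lt_succ_iff.mp (mem_range.mp hk)
      calc (k : ℝ) ≤ (⌊c / ℏ⌋₊ : ℝ) := by exact_mod_cast hk1
        _ ≤ c / ℏ := Nat.floor_le (by positivity)
    have h0 := ha 0 k x hx
    rw [norm_iteratedFDerivWithin_zero] at h0
    simp only [Nat.cast_zero, zero_add, pow_zero, mul_one] at h0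
    have hden : (1:ℝ) ≤ ((k : ℝ) + 1) ^ m :=
      Real.one_le_rpow (by exact_mod_cast Nat.le_add_left 1 k) (by linarith)
    have hak : ‖a k x‖ ≤ C * R ^ k * (k.factorial : ℝ) := by
      refine h0.trans ?_
      exact div_le_self (by positivity) hden
    have hfac : (k.factorial : ℝ) ≤ ((k : ℝ)) ^ k := by
      calc (k.factorial : ℝ) ≤ ((k ^ k : ℕ) : ℝ) := by exact_mod_cast k.factorial_le_pow
        _ = ((k : ℝ)) ^ k := by push_cast; ring
    have hpow : ℏ ^ k * (k.factorial : ℝ) ≤ c ^ k := by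
      calc ℏ ^ k * (k.factorial : ℝ) ≤ ℏ ^ k * (c / ℏ) ^ k := by
            apply mul_le_mul_of_nonneg_left _ (by positivity)
            exact hfac.trans (pow_le_pow_left₀ (Nat.cast_nonneg k) hk' k)
        _ = (ℏ * (c / ℏ)) ^ k := (mul_pow _ _ _).symm
        _ = c ^ k := by rw [mul_div_cancel₀ _ (ne_of_gt hℏ0)]
    rw [norm_smul, Real.norm_eq_abs, abs_pow, abs_of_pos hℏ0]
    calc ℏ ^ k * ‖a k x‖ ≤ ℏ ^ k * (C * R ^ k * (k.factorial : ℝ)) :=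
          mul_le_mul_of_nonneg_left hak (by positivity)
      _ = C * R ^ k * (ℏ ^ k * (k.factorial : ℝ)) := by ring
      _ ≤ C * R ^ k * c ^ k := by
          apply mul_le_mul_of_nonneg_left hpow (by positivity)
      _ = C * (R * c) ^ k := by rw [mul_pow]; ring
  calc ‖∑ k ∈ range (⌊c / ℏ⌋₊ + 1), ℏ ^ k • a k x‖
      ≤ ∑ k ∈ range (⌊c / ℏ⌋₊ + 1), ‖ℏ ^ k • a k x‖ := norm_sum_le _ _
    _ ≤ ∑ k ∈ range (⌊c / ℏ⌋₊ + 1), C * (R * c) ^ k := Finset.sum_le_sum key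
    _ = C * ∑ k ∈ range (⌊c / ℏ⌋₊ + 1), (R * c) ^ k := by rw [Finset.mul_sum]
    _ ≤ C * (1 - R * c)⁻¹ := by
        apply mul_le_mul_of_nonneg_left _ hC
        have hs := summable_geometric_of_lt_one hRc0 hRc
        have := Summable.sum_le_tsum (range (⌊c / ℏ⌋₊ + 1))
          (fun i _ => pow_nonneg hRc0 i) hs
        rwa [tsum_geometric_of_lt_one hRc0 hRc] at this
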